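/- arXiv:1805.00601 — 4 statements merged into one kernel-verified Lean document; each statement's English description precedes it below -/
import Mathlib

section
/- For $b, m, h > 0$, define $g_h(t) = \frac{m^2}{t} + \frac{h^{2b+1} - (h - \min\{h,t\})^{2b+1}}{2b+1}$ for $t > 0$. If $h \le h^\# = \frac{b+1}{b^{b/(b+1)}} m^{1/(b+1)}$, then $g_h$ is (weakly) decreasing on $(0,\infty)$, i.e. $g_h(s) \ge g_h(t)$ whenever $0 < s \le t$. -/
/-!
On `(0, h]` the derivative of `g_h` is `(h - t)^(2b) - m²/t²`, which is nonpositive iff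
`t (h - t)^b ≤ m`. By weighted AM-GM the maximum of `t (h - t)^b` over `[0, h]` is
`b^b h^(b+1) / (b+1)^(b+1)`, and this is at most `m` exactly when `h ≤ h^#`.
On `[h, ∞)` the function `g_h` is `m²/t` plus a constant.
-/

open Real Set

noncomputable def hSharp (b m : ℝ) : ℝ := (b + 1) / b ^ (b / (b + 1)) * m ^ (1 / (b + 1))

noncomputable def g (b m h t : ℝ) : ℝ :=
  m ^ 2 / t + (h ^ (2 * b + 1) - (h - min h t) ^ (2 * b + 1)) / (2 * b + 1)

section
variable {b h m x : ℝ}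

/-- The maximum of `x (h - x)^b` on `[0, h]` is attained at `x = h / (b + 1)`. -/
theorem mul_sub_rpow_le (hb : 0 < b) (hx : 0 ≤ x) (hxh : x ≤ h) :
    (b + 1) ^ (b + 1) * (x * (h - x) ^ b) ≤ b ^ b * h ^ (b + 1) := by
  have hb1 : 0 < b + 1 := by linarith
  have hhx : 0 ≤ h - x := by linarith
  -- weighted AM-GM for `(b + 1) x` and `(b + 1) (h - x) / b` with weights `1 : b`
  have amgm := geom_mean_le_arith_mean2_weighted (w₁ := 1 / (b + 1)) (w₂ := b / (b + 1))
    (p₁ := (b + 1) * x) (p₂ := (b + 1) / b * (h - x)) (by positivity) (by positivity)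
    (by positivity) (by positivity) (by field_simp; ring)
  have hmean : 1 / (b + 1) * ((b + 1) * x) + b / (b + 1) * ((b + 1) / b * (h - x)) = h := by
    field_simp; ring
  rw [hmean] at amgm
  have hpow := rpow_le_rpow (by positivity) amgm hb1.le
  rw [mul_rpow (by positivity) (by positivity), ← rpow_mul (by positivity),
    ← rpow_mul (by positivity), div_mul_cancel₀ _ hb1.ne', div_mul_cancel₀ _ hb1.ne', rpow_one,
    mul_rpow (by positivity) hhx, div_rpow hb1.le hb.le] at hpow
  have hsucc : (b + 1) ^ (b + 1) = (b + 1) * (b + 1) ^ b := by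
    rw [rpow_add hb1, rpow_one, mul_comm]
  calc (b + 1) ^ (b + 1) * (x * (h - x) ^ b)
      = b ^ b * ((b + 1) * x * ((b + 1) ^ b / b ^ b * (h - x) ^ b)) := by
        rw [hsucc]; field_simp
    _ ≤ b ^ b * h ^ (b + 1) := by gcongr

theorem hSharp_rpow (hb : 0 < b) (hm : 0 ≤ m) :
    hSharp b m ^ (b + 1) = (b + 1) ^ (b + 1) / b ^ b * m := by
  have hb1 : 0 < b + 1 := by linarith
  rw [hSharp, mul_rpow (by positivity) (by positivity), div_rpow hb1.le (by positivity),
    ← rpow_mul hb.le, ← rpow_mul hm, div_mul_cancel₀ _ hb1.ne', div_mul_cancel₀ _ hb1.ne',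
    rpow_one]

theorem mul_sub_rpow_le_of_le_hSharp (hb : 0 < b) (hm : 0 ≤ m) (hle : h ≤ hSharp b m)
    (hx : 0 ≤ x) (hxh : x ≤ h) : x * (h - x) ^ b ≤ m := by
  have hK : 0 < (b + 1) ^ (b + 1) / b ^ b := by positivity
  refine le_of_mul_le_mul_left ?_ hK
  calc (b + 1) ^ (b + 1) / b ^ b * (x * (h - x) ^ b)
      = (b + 1) ^ (b + 1) * (x * (h - x) ^ b) / b ^ b := by ring
    _ ≤ b ^ b * h ^ (b + 1) / b ^ b :=
      div_le_div_of_nonneg_right (mul_sub_rpow_le hb hx hxh) (by positivity)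
    _ = h ^ (b + 1) := by field_simp
    _ ≤ hSharp b m ^ (b + 1) := by gcongr; linarith
    _ = (b + 1) ^ (b + 1) / b ^ b * m := hSharp_rpow hb hm

theorem hasDerivAt_inv_sub_rpow (hb : 0 < b) (hx : x ≠ 0) :
    HasDerivAt (fun t ↦ m ^ 2 / t - (h - t) ^ (2 * b + 1) / (2 * b + 1))
      (-(m ^ 2 / x ^ 2) + (h - x) ^ (2 * b)) x := by
  have hinv : HasDerivAt (fun t ↦ m ^ 2 / t) (-(m ^ 2 / x ^ 2)) x := by
    simpa [div_eq_mul_inv] using (hasDerivAt_inv hx).const_mul (m ^ 2)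
  have hpow := ((hasDerivAt_id x).const_sub h).rpow_const (p := 2 * b + 1) (Or.inr (by linarith))
  refine (hinv.sub (hpow.div_const (2 * b + 1))).congr_deriv ?_
  rw [id, add_sub_cancel_right]
  field_simp
  ring

theorem antitoneOn_inv_sub_rpow (hb : 0 < b) (hm : 0 ≤ m) (hle : h ≤ hSharp b m) :
    AntitoneOn (fun t ↦ m ^ 2 / t - (h - t) ^ (2 * b + 1) / (2 * b + 1)) (Ioc 0 h) := by
  refine antitoneOn_of_hasDerivWithinAt_nonpos (convex_Ioc 0 h)
    (fun x hx ↦ (hasDerivAt_inv_sub_rpow hb hx.1.ne').continuousAt.continuousWithinAt)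
    (fun x hx ↦ (hasDerivAt_inv_sub_rpow hb (interior_subset hx).1.ne').hasDerivWithinAt) ?_
  rw [interior_Ioc]
  rintro x ⟨hx, hxh⟩
  have hhx : 0 ≤ h - x := by linarith
  have hsq : (h - x) ^ (2 * b) = ((h - x) ^ b) ^ 2 := by
    rw [← rpow_mul_natCast hhx]; ring_nf
  have hbound : ((h - x) ^ b) ^ 2 ≤ m ^ 2 / x ^ 2 := by
    rw [le_div_iff₀ (by positivity), ← mul_pow, mul_comm]
    exact pow_le_pow_left₀ (by positivity) (mul_sub_rpow_le_of_le_hSharp hb hm hle hx.le hxh.le) 2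
  rw [hsq]
  linarith

theorem antitoneOn_g_Ioc (hb : 0 < b) (hm : 0 ≤ m) (hle : h ≤ hSharp b m) :
    AntitoneOn (g b m h) (Ioc 0 h) := by
  intro s hs t ht hst
  have hF := antitoneOn_inv_sub_rpow hb hm hle hs ht hst
  simp only [g, min_eq_right hs.2, min_eq_right ht.2, sub_div]
  linarith

theorem antitoneOn_g_Ici (hb : 0 < b) (hh : 0 < h) : AntitoneOn (g b m h) (Ici h) := by
  intro s hs t ht hst
  have hb0 : 2 * b + 1 ≠ 0 := by linarith
  simp only [g, min_eq_left (mem_Ici.1 hs), min_eq_left (mem_Ici.1 ht), sub_self, zero_rpow hb0]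
  gcongr
  exact hh.trans_le hs

theorem antitoneOn_g (hb : 0 < b) (hm : 0 ≤ m) (hh : 0 < h) (hle : h ≤ hSharp b m) :
    AntitoneOn (g b m h) (Ioi 0) := by
  rw [← Ioc_union_Ici_eq_Ioi hh]
  exact (antitoneOn_g_Ioc hb hm hle).union_right (antitoneOn_g_Ici hb hh) (isGreatest_Ioc hh)
    isLeast_Ici

end

/-- If h ≤ h^#, then g_h is weakly decreasing on (0,∞). -/
theorem g_decreasing (b m h : ℝ) (hb : 0 < b) (hm : 0 < m) (hh : 0 < h)
    (hle : h ≤ (b+1) / b ^ (b/(b+1)) * m ^ (1/(b+1))) :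
    ∀ s t : ℝ, 0 < s → s ≤ t →
      m^2 / t + (h ^ (2*b+1) - (h - min h t) ^ (2*b+1)) / (2*b+1) ≤
      m^2 / s + (h ^ (2*b+1) - (h - min h s) ^ (2*b+1)) / (2*b+1) :=
  fun _ _ hs hst ↦ antitoneOn_g hb hm.le hh hle hs (hs.trans_le hst) hst
end

section
/- Let $b, m > 0$ and for $h > h^\#$ let $T_h \in (h/(b+1), h)$ be the larger solution of $t^2(h-t)^{2b} = m^2$ in $(0,h)$. Then $h \mapsto T_h$ is strictly increasing on $(h^\#, \infty)$. -/
/-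
Write `g_h(t) = t (h - t)^b ≥ 0` on `[0, h]`, so the defining equations give `g_{h₁}(T₁) = g_{h₂}(T₂)`.
The derivative `g_h'(t) = (h - t)^(b-1) (h - (b+1) t)` is negative for `t > h/(b+1)`, so `g_h` is strictly
decreasing on `[h/(b+1), h]`, while `g_h(t)` is strictly increasing in `h`. If `h₁ < h₂` but `T₂ ≤ T₁`,
then `T₂ ∈ [h₁/(b+1), h₁]` and `g_{h₁}(T₁) ≤ g_{h₁}(T₂) < g_{h₂}(T₂)`, a contradiction.
-/

open Set

theorem nonneg_of_div_add_one_le {b h t : ℝ} (hb : 0 < b) (hh : h / (b + 1) ≤ t) (ht : t ≤ h) :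
    0 ≤ t := by
  have := (div_le_iff₀ (by linarith : 0 < b + 1)).mp hh
  by_contra! ht0
  nlinarith [mul_neg_of_neg_of_pos ht0 hb]

theorem strictAntiOn_mul_sub_rpow {b : ℝ} (h : ℝ) (hb : 0 < b) :
    StrictAntiOn (fun t => t * (h - t) ^ b) (Icc (h / (b + 1)) h) := by
  have hb1 : 0 < b + 1 := by linarith
  apply strictAntiOn_of_deriv_neg (convex_Icc _ _)
  · exact (continuous_id.mul ((continuous_const.sub continuous_id).rpow_const
      fun _ => Or.inr hb.le)).continuousOn
  · intro t ht
    rw [interior_Icc] at ht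
    obtain ⟨ht_gt, ht_lt⟩ := ht
    have hpos : 0 < h - t := by linarith
    have hderiv : HasDerivAt (fun t : ℝ => t * (h - t) ^ b)
        (1 * (h - t) ^ b + t * (b * (h - t) ^ (b - 1) * (-1))) t :=
      (hasDerivAt_id t).mul
        ((Real.hasDerivAt_rpow_const (Or.inl hpos.ne')).comp t ((hasDerivAt_id' t).const_sub h))
    have hsplit : (h - t) ^ b = (h - t) ^ (b - 1) * (h - t) := by
      rw [← Real.rpow_add_one hpos.ne']; ring_nf
    have hneg : h - (b + 1) * t < 0 := by
      have := (div_lt_iff₀ hb1).mp ht_gt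
      linarith
    rw [hderiv.deriv]
    calc 1 * (h - t) ^ b + t * (b * (h - t) ^ (b - 1) * (-1))
        = (h - t) ^ (b - 1) * (h - (b + 1) * t) := by rw [hsplit]; ring
      _ < 0 := mul_neg_of_pos_of_neg (Real.rpow_pos_of_pos hpos _) hneg

theorem lt_of_mul_sub_rpow_eq {b h₁ h₂ T₁ T₂ : ℝ} (hb : 0 < b) (h12 : h₁ < h₂)
    (hT₁ : h₁ / (b + 1) ≤ T₁) (hT₁' : T₁ ≤ h₁) (hT₂ : h₂ / (b + 1) ≤ T₂)
    (heq : T₁ * (h₁ - T₁) ^ b = T₂ * (h₂ - T₂) ^ b) :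
    T₁ < T₂ := by
  have hb1 : 0 < b + 1 := by linarith
  have hh₁ : 0 ≤ h₁ := (nonneg_of_div_add_one_le hb hT₁ hT₁').trans hT₁'
  have hT₂pos : 0 < T₂ := lt_of_lt_of_le (div_pos (by linarith) hb1) hT₂
  by_contra! hT21
  have hT₂mem : T₂ ∈ Icc (h₁ / (b + 1)) h₁ :=
    ⟨le_trans (by gcongr) hT₂, by linarith⟩
  have hle : T₁ * (h₁ - T₁) ^ b ≤ T₂ * (h₁ - T₂) ^ b :=
    (strictAntiOn_mul_sub_rpow h₁ hb).antitoneOn hT₂mem ⟨hT₁, hT₁'⟩ hT21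
  have hlt : T₂ * (h₁ - T₂) ^ b < T₂ * (h₂ - T₂) ^ b :=
    mul_lt_mul_of_pos_left (Real.rpow_lt_rpow (by linarith) (by linarith) hb) hT₂pos
  linarith

theorem sq_mul_rpow_two_mul {x : ℝ} (t b : ℝ) (hx : 0 ≤ x) :
    t ^ 2 * x ^ (2 * b) = (t * x ^ b) ^ 2 := by
  rw [mul_comm 2 b, Real.rpow_mul hx, Real.rpow_two, mul_pow]

theorem Th_strict_mono_general (b m h₁ h₂ T₁ T₂ : ℝ) (hb : 0 < b) (h12 : h₁ < h₂)
    (hT₁ : h₁/(b+1) < T₁) (hT₁' : T₁ < h₁) (he₁ : T₁^2 * (h₁ - T₁) ^ (2*b) = m^2)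
    (hT₂ : h₂/(b+1) < T₂) (hT₂' : T₂ < h₂) (he₂ : T₂^2 * (h₂ - T₂) ^ (2*b) = m^2) :
    T₁ < T₂ := by
  have hT₁_nonneg := nonneg_of_div_add_one_le hb hT₁.le hT₁'.le
  have hT₂_nonneg := nonneg_of_div_add_one_le hb hT₂.le hT₂'.le
  have hsq : (T₁ * (h₁ - T₁) ^ b) ^ 2 = (T₂ * (h₂ - T₂) ^ b) ^ 2 := by
    rw [← sq_mul_rpow_two_mul _ _ (by linarith), ← sq_mul_rpow_two_mul _ _ (by linarith), he₁, he₂]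
  have heq : T₁ * (h₁ - T₁) ^ b = T₂ * (h₂ - T₂) ^ b :=
    (sq_eq_sq₀ (by have := Real.rpow_nonneg (sub_nonneg.2 hT₁'.le) b; positivity)
      (by have := Real.rpow_nonneg (sub_nonneg.2 hT₂'.le) b; positivity)).mp hsq
  exact lt_of_mul_sub_rpow_eq hb h12 hT₁.le hT₁'.le hT₂.le heq

/-- The map h ↦ T_h (larger solution of t²(h-t)^{2b} = m² in (h/(b+1), h))
is strictly increasing on (h^#, ∞). -/
theorem Th_strict_mono (b m h₁ h₂ T₁ T₂ : ℝ) (hb : 0 < b) (hm : 0 < m)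
    (hh₁ : (b+1) / b ^ (b/(b+1)) * m ^ (1/(b+1)) < h₁) (h12 : h₁ < h₂)
    (hT₁ : h₁/(b+1) < T₁) (hT₁' : T₁ < h₁) (he₁ : T₁^2 * (h₁ - T₁) ^ (2*b) = m^2)
    (hT₂ : h₂/(b+1) < T₂) (hT₂' : T₂ < h₂) (he₂ : T₂^2 * (h₂ - T₂) ^ (2*b) = m^2) :
    T₁ < T₂ :=
  Th_strict_mono_general b m h₁ h₂ T₁ T₂ hb h12 hT₁ hT₁' he₁ hT₂ hT₂' he₂
end

section
/- Let $b, m > 0$ and $h \ge h^*$. Then $g_h(t_h) \le \lim_{t\to\infty} g_h(t) = \frac{h^{2b+1}}{2b+1}$, where $t_h$ is the smaller solution of $t^2(h-t)^{2b} = m^2$ in $(0,h)$ and $g_h(t) = \frac{m^2}{t} + \frac{h^{2b+1} - (h-\min\{h,t\})^{2b+1}}{2b+1}$. -/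
/-!
With `f s = s (h - s)^b`, the equation says `f t_h = m`. Since `f` is increasing on
`[0, h/(b+1)]` and `h ≥ h*` means `f (h/(2b+2)) ≥ m`, we get `(2b+1) t_h ≤ h - t_h`, hence
`m²/t_h = t_h (h - t_h)^{2b} ≤ (h - t_h)^{2b+1}/(2b+1)`, which is exactly
`g_h(t_h) ≤ h^{2b+1}/(2b+1)`.
For `s ≥ h` the second term of `g_h` is constant, so the limit is that constant.
-/

open Filter Real Set Topology

theorem strictMonoOn_mul_sub_rpow {b : ℝ} (hb : 0 ≤ b) (h : ℝ) :
    StrictMonoOn (fun s : ℝ => s * (h - s) ^ b) (Icc 0 (h / (b + 1))) := by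
  have hb1 : 0 < b + 1 := by linarith
  refine strictMonoOn_of_deriv_pos (convex_Icc _ _) ?_ fun s hs => ?_
  · exact continuousOn_id.mul ((continuousOn_const.sub continuousOn_id).rpow_const
      fun _ _ => Or.inr hb)
  rw [interior_Icc, mem_Ioo, lt_div_iff₀ hb1] at hs
  have hbs : b * s < h - s := by linarith
  have hhs : 0 < h - s := by nlinarith
  have hderiv : HasDerivAt (fun s : ℝ => s * (h - s) ^ b)
      (1 * (h - s) ^ b + s * ((0 - 1) * b * (h - s) ^ (b - 1))) s :=
    (hasDerivAt_id s).mul (((hasDerivAt_const s h).sub (hasDerivAt_id s)).rpow_const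
      (Or.inl hhs.ne'))
  rw [hderiv.deriv, rpow_sub_one hhs.ne']
  have hpow : 0 < (h - s) ^ b / (h - s) := by positivity
  have : 0 < (h - s) ^ b / (h - s) * (h - s - b * s) := by nlinarith
  field_simp at this ⊢
  linarith

/-- The threshold `h*` is exactly the value of `h` at which the maximum of `s ↦ s (h - s)^b`,
attained at `s = h / (2b + 2)`, reaches `m`. -/
theorem le_mul_sub_rpow_of_threshold_le {b m h : ℝ} (hb : 0 ≤ b) (hm : 0 ≤ m)
    (hh : (2*b+2) / (2*b+1) ^ (b/(b+1)) * m ^ (1/(b+1)) ≤ h) :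
    m ≤ h / (2*b+2) * (h - h / (2*b+2)) ^ b := by
  have hb1 : 0 < b + 1 := by linarith
  set c := h / (2*b+2) with hc_def
  have hhc : h - c = (2*b+1) * c := by rw [hc_def]; field_simp; ring
  have hroot : m ^ (1/(b+1)) / (2*b+1) ^ (b/(b+1)) ≤ c := by
    rw [hc_def, le_div_iff₀ (by linarith)]
    calc m ^ (1/(b+1)) / (2*b+1) ^ (b/(b+1)) * (2*b+2)
        = (2*b+2) / (2*b+1) ^ (b/(b+1)) * m ^ (1/(b+1)) := by ring
      _ ≤ h := hh
  have hpow : m / (2*b+1) ^ b ≤ c ^ (b+1) := by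
    have := rpow_le_rpow (by positivity) hroot hb1.le
    rwa [div_rpow (by positivity) (by positivity), ← rpow_mul hm, ← rpow_mul (by linarith),
      div_mul_cancel₀ _ hb1.ne', div_mul_cancel₀ _ hb1.ne', rpow_one] at this
  have hc : 0 ≤ c := le_trans (by positivity) hroot
  calc m ≤ (2*b+1) ^ b * c ^ (b+1) := by
        rwa [div_le_iff₀' (by positivity)] at hpow
    _ = c * (h - c) ^ b := by
        rw [hhc, mul_rpow (by linarith) hc, rpow_add_one' hc hb1.ne']
        ring

theorem mul_sub_rpow_eq_of_sq_mul_eq {b m h t : ℝ} (hm : 0 ≤ m) (ht : 0 ≤ t) (hth : t ≤ h)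
    (he : t^2 * (h - t) ^ (2*b) = m^2) : t * (h - t) ^ b = m := by
  have hht : 0 ≤ h - t := by linarith
  refine (pow_left_inj₀ (by positivity) hm two_ne_zero).1 ?_
  rw [mul_pow, ← he, ← rpow_mul_natCast hht]
  norm_num [mul_comm]

theorem mul_rpow_le_rpow_add_one_div {a t u : ℝ} (ha : 0 < a + 1) (hu : 0 ≤ u)
    (htu : (a + 1) * t ≤ u) : t * u ^ a ≤ u ^ (a + 1) / (a + 1) := by
  rw [le_div_iff₀ ha, rpow_add_one' hu ha.ne']
  nlinarith [rpow_nonneg hu a]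

theorem tendsto_div_add_sub_rpow_sub_min {p : ℝ} (hp : p ≠ 0) (C h : ℝ) :
    Tendsto (fun s : ℝ => C / s + (h ^ p - (h - min h s) ^ p) / p) atTop (𝓝 (h ^ p / p)) := by
  have hlim : Tendsto (fun s : ℝ => C / s + h ^ p / p) atTop (𝓝 (h ^ p / p)) := by
    simpa using (tendsto_const_nhds.div_atTop tendsto_id).add_const (h ^ p / p)
  refine hlim.congr' ?_
  filter_upwards [eventually_ge_atTop h] with s hs
  rw [min_eq_left hs, sub_self, zero_rpow hp, sub_zero]

/-- For h ≥ h^*, g_h(t_h) ≤ lim_{t→∞} g_h(t) = h^{2b+1}/(2b+1). -/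
theorem g_th_le_limit (b m h t : ℝ) (hb : 0 < b) (hm : 0 < m)
    (hh : (2*b+2) / (2*b+1) ^ (b/(b+1)) * m ^ (1/(b+1)) ≤ h)
    (ht : 0 < t) (ht' : t < h/(b+1)) (he : t^2 * (h - t) ^ (2*b) = m^2) :
    m^2 / t + (h ^ (2*b+1) - (h - min h t) ^ (2*b+1)) / (2*b+1) ≤
      h ^ (2*b+1) / (2*b+1) ∧
    Filter.Tendsto (fun s : ℝ =>
        m^2 / s + (h ^ (2*b+1) - (h - min h s) ^ (2*b+1)) / (2*b+1))
      Filter.atTop (nhds (h ^ (2*b+1) / (2*b+1))) := by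
  have hb1 : 0 < b + 1 := by linarith
  have hth : t < h := by
    rw [lt_div_iff₀ hb1] at ht'
    nlinarith
  have hft : t * (h - t) ^ b = m := mul_sub_rpow_eq_of_sq_mul_eq hm.le ht.le hth.le he
  have hmax := le_mul_sub_rpow_of_threshold_le hb.le hm.le hh
  have htc : t ≤ h / (2*b+2) := by
    refine ((strictMonoOn_mul_sub_rpow hb.le h).le_iff_le ⟨ht.le, ht'.le⟩ ⟨?_, ?_⟩).1
      (hft ▸ hmax)
    · have : 0 < h := by linarith
      positivity
    · exact div_le_div_of_nonneg_left (by linarith) hb1 (by linarith)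
  have hsq : m^2 / t = t * (h - t) ^ (2*b) := by
    rw [← he]
    field_simp
  have hkey : t * (h - t) ^ (2*b) ≤ (h - t) ^ (2*b+1) / (2*b+1) :=
    mul_rpow_le_rpow_add_one_div (by linarith) (by linarith)
      (by rw [le_div_iff₀ (by linarith)] at htc; linarith)
  refine ⟨?_, tendsto_div_add_sub_rpow_sub_min (by linarith) _ _⟩
  rw [min_eq_right hth.le, hsq]
  linarith [sub_div (h ^ (2*b+1)) ((h - t) ^ (2*b+1)) (2*b+1)]
end

section
/- Let $b, m > 0$, let $h^\# < h_1 < h_2 < h^*$, and let $\tau_{h_1}, \tau_{h_2}$ be the unique values with $\tau_{h_i} > T_{h_i}$ and $g_{h_i}(\tau_{h_i}) = g_{h_i}(t_{h_i})$ for $i = 1, 2$. Then $\tau_{h_1} < \tau_{h_2}$ (the map $h \mapsto \tau_h$ is strictly increasing on $(h^\#, h^*)$). -/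
/-!
For `t < h` one has `g_h'(t) = (t²(h-t)^{2b} - m²) / t²`, and `t²(h-t)^{2b}` increases up to
`h/(b+1)` and decreases after it; for `t ≥ h`, `g_h(t) = m²/t + const`. So `g_h` decreases on
`(0, t_h]`, increases on `[t_h, T_h]` and decreases on `[T_h, ∞)`.

For `h₁ < h₂` the difference `g_{h₂} - g_{h₁}` is strictly larger at `τ_{h₁}` than at `t_{h₁}`,
because `x ↦ (x + d)^{2b+1} - x^{2b+1}` is increasing. Hence
`g_{h₂}(τ_{h₁}) > g_{h₂}(t_{h₁}) ≥ g_{h₂}(t_{h₂}) = g_{h₂}(τ_{h₂})`, and since `g_{h₂}` decreases on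
`[T_{h₂}, ∞) ∋ τ_{h₂}`, this forces `τ_{h₁} < τ_{h₂}`.
-/

open Real Set

noncomputable def phi (b h t : ℝ) : ℝ := t ^ 2 * (h - t) ^ (2 * b)

noncomputable def gFun (b m h t : ℝ) : ℝ :=
  m ^ 2 / t + (h ^ (2 * b + 1) - (h - min h t) ^ (2 * b + 1)) / (2 * b + 1)

section

variable {b m h : ℝ}

lemma continuous_phi (hb : 0 < b) : Continuous (phi b h) := by
  unfold phi
  fun_prop (disch := positivity)

lemma continuousOn_gFun (hb : 0 < b) : ContinuousOn (gFun b m h) (Ioi 0) := by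
  refine (continuousOn_const.div continuousOn_id fun t ht => ne_of_gt ht).add
    (Continuous.continuousOn ?_)
  fun_prop (disch := positivity)

lemma hasDerivAt_phi {t : ℝ} (ht : t < h) :
    HasDerivAt (phi b h) (2 * t * (h - t) ^ (2 * b - 1) * (h - (b + 1) * t)) t := by
  have hpos : 0 < h - t := sub_pos.2 ht
  have hsub : HasDerivAt (fun s => (h - s) ^ (2 * b)) (-(2 * b * (h - t) ^ (2 * b - 1))) t := by
    simpa using ((hasDerivAt_id t).const_sub h).rpow_const (p := 2 * b) (Or.inl hpos.ne')
  refine ((hasDerivAt_pow 2 t).mul hsub).congr_deriv ?_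
  rw [rpow_sub_one hpos.ne']
  field_simp
  ring

lemma hasDerivAt_gFun {t : ℝ} (hb : 0 < b) (ht : 0 < t) (hth : t < h) :
    HasDerivAt (gFun b m h) ((phi b h t - m ^ 2) / t ^ 2) t := by
  have hpos : 0 < h - t := sub_pos.2 hth
  have hpow : HasDerivAt (fun s => (h - s) ^ (2 * b + 1)) (-((2 * b + 1) * (h - t) ^ (2 * b))) t := by
    convert ((hasDerivAt_id' t).const_sub h).rpow_const (p := 2 * b + 1) (Or.inl hpos.ne') using 1
    rw [add_sub_cancel_right]
    ring
  have hsmooth := ((hasDerivAt_inv ht.ne').const_mul (m ^ 2)).add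
    (((hasDerivAt_const t (h ^ (2 * b + 1))).sub hpow).div_const (2 * b + 1))
  refine (hsmooth.congr_of_eventuallyEq ?_).congr_deriv ?_
  · filter_upwards [Iio_mem_nhds hth] with s (hs : s < h)
    simp [gFun, min_eq_right hs.le, div_eq_mul_inv]
  · unfold phi
    field_simp
    ring

lemma phi_strictMonoOn (hb : 0 < b) : StrictMonoOn (phi b h) (Icc 0 (h / (b + 1))) := by
  refine strictMonoOn_of_deriv_pos (convex_Icc _ _) (continuous_phi hb).continuousOn ?_
  rw [interior_Icc]
  rintro t ⟨ht0, htc⟩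
  have hlt : (b + 1) * t < h := (lt_div_iff₀' (by linarith)).1 htc
  rw [(hasDerivAt_phi (by nlinarith)).deriv]
  have : 0 < (h - t) ^ (2 * b - 1) := rpow_pos_of_pos (by nlinarith) _
  have : 0 < h - (b + 1) * t := by linarith
  positivity

lemma phi_strictAntiOn (hb : 0 < b) : StrictAntiOn (phi b h) (Icc (h / (b + 1)) h) := by
  refine strictAntiOn_of_deriv_neg (convex_Icc _ _) (continuous_phi hb).continuousOn ?_
  rw [interior_Icc]
  rintro t ⟨hct, hth⟩
  have hlt : h < (b + 1) * t := (div_lt_iff₀' (by linarith)).1 hct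
  have ht0 : 0 < t := by nlinarith
  rw [(hasDerivAt_phi hth).deriv]
  have : 0 < 2 * t * (h - t) ^ (2 * b - 1) := by
    have := rpow_pos_of_pos (sub_pos.2 hth) (2 * b - 1)
    positivity
  exact mul_neg_of_pos_of_neg this (by linarith)

lemma strictAntiOn_gFun {a c : ℝ} (hb : 0 < b) (ha : 0 < a) (hc : c ≤ h)
    (hφ : ∀ t ∈ Ioo a c, phi b h t < m ^ 2) : StrictAntiOn (gFun b m h) (Icc a c) := by
  refine strictAntiOn_of_deriv_neg (convex_Icc a c)
    ((continuousOn_gFun hb).mono fun t ht => ha.trans_le ht.1) fun t ht => ?_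
  rw [interior_Icc] at ht
  rw [(hasDerivAt_gFun hb (ha.trans ht.1) (ht.2.trans_le hc)).deriv]
  exact div_neg_of_neg_of_pos (sub_neg.2 (hφ t ht)) (by nlinarith [ha.trans ht.1])

lemma strictMonoOn_gFun {a c : ℝ} (hb : 0 < b) (ha : 0 < a) (hc : c ≤ h)
    (hφ : ∀ t ∈ Ioo a c, m ^ 2 < phi b h t) : StrictMonoOn (gFun b m h) (Icc a c) := by
  refine strictMonoOn_of_deriv_pos (convex_Icc a c)
    ((continuousOn_gFun hb).mono fun t ht => ha.trans_le ht.1) fun t ht => ?_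
  rw [interior_Icc] at ht
  rw [(hasDerivAt_gFun hb (ha.trans ht.1) (ht.2.trans_le hc)).deriv]
  exact div_pos (sub_pos.2 (hφ t ht)) (by nlinarith [ha.trans ht.1])

lemma gFun_of_le {t : ℝ} (hb : 0 < b) (ht : h ≤ t) :
    gFun b m h t = m ^ 2 / t + h ^ (2 * b + 1) / (2 * b + 1) := by
  rw [gFun, min_eq_left ht, sub_self, zero_rpow (by positivity), sub_zero]

lemma isMinOn_gFun {t T : ℝ} (hb : 0 < b) (ht : 0 < t) (htc : t < h / (b + 1))
    (hTc : h / (b + 1) < T) (hTh : T < h) (hφt : phi b h t = m ^ 2) (hφT : phi b h T = m ^ 2) :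
    IsMinOn (gFun b m h) (Ioc 0 T) t := by
  rintro s ⟨hs0, hsT⟩
  rcases lt_or_ge s t with hst | hts
  · have hφ (u) (hu : u ∈ Ioo s t) : phi b h u < m ^ 2 :=
      hφt ▸ phi_strictMonoOn hb ⟨(hs0.trans hu.1).le, (hu.2.trans htc).le⟩ ⟨ht.le, htc.le⟩ hu.2
    exact (strictAntiOn_gFun hb hs0 (by linarith) hφ ⟨le_rfl, hst.le⟩ ⟨hst.le, le_rfl⟩ hst).le
  · have hφ (u) (hu : u ∈ Ioo t T) : m ^ 2 < phi b h u := by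
      rcases le_or_gt u (h / (b + 1)) with huc | huc
      · exact hφt ▸ phi_strictMonoOn hb ⟨ht.le, htc.le⟩ ⟨(ht.trans hu.1).le, huc⟩ hu.1
      · exact hφT ▸ phi_strictAntiOn hb ⟨huc.le, (hu.2.trans hTh).le⟩ ⟨hTc.le, hTh.le⟩ hu.2
    exact (strictMonoOn_gFun hb ht hTh.le hφ).monotoneOn ⟨le_rfl, by linarith⟩ ⟨hts, hsT⟩ hts

lemma strictAntiOn_gFun_Ici {T : ℝ} (hb : 0 < b) (hm : 0 < m) (hTc : h / (b + 1) < T)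
    (hTh : T < h) (hφT : phi b h T = m ^ 2) : StrictAntiOn (gFun b m h) (Ici T) := by
  have hT : 0 < T := by
    have hh : h / (b + 1) * (b + 1) = h := div_mul_cancel₀ h (by positivity)
    nlinarith
  have hφ (u) (hu : u ∈ Ioo T h) : phi b h u < m ^ 2 :=
    hφT ▸ phi_strictAntiOn hb ⟨hTc.le, hTh.le⟩ ⟨hTc.le.trans hu.1.le, hu.2.le⟩ hu.1
  have htail : StrictAntiOn (gFun b m h) (Ici h) := by
    intro x hx y hy hxy
    rw [gFun_of_le hb hx, gFun_of_le hb hy]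
    gcongr
    exact hT.trans (hTh.trans_le hx)
  rw [← Icc_union_Ici_eq_Ici hTh.le]
  exact (strictAntiOn_gFun hb hT le_rfl hφ).union htail (isGreatest_Icc hTh.le) isLeast_Ici

lemma strictMonoOn_rpow_add_sub_rpow {p d : ℝ} (hp : 1 < p) (hd : 0 < d) :
    StrictMonoOn (fun x : ℝ => (x + d) ^ p - x ^ p) (Ici 0) := by
  refine strictMonoOn_of_deriv_pos (convex_Ici 0) (by fun_prop (disch := positivity)) ?_
  rw [interior_Ici]
  intro x (hx : 0 < x)
  have hderiv : HasDerivAt (fun x : ℝ => (x + d) ^ p - x ^ p)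
      (p * (x + d) ^ (p - 1) - p * x ^ (p - 1)) x := by
    refine ((((hasDerivAt_id' x).add_const d).rpow_const (Or.inr hp.le)).sub
      ((hasDerivAt_id' x).rpow_const (p := p) (Or.inr hp.le))).congr_deriv ?_
    ring
  rw [hderiv.deriv]
  have : x ^ (p - 1) < (x + d) ^ (p - 1) := by gcongr; linarith
  nlinarith

lemma rpow_sub_min_sub_rpow_sub_min_lt {p h₁ h₂ u v : ℝ} (hp : 1 < p) (h12 : h₁ < h₂)
    (hu : u < h₁) (huv : u < v) :
    (h₂ - min h₂ v) ^ p - (h₁ - min h₁ v) ^ p < (h₂ - u) ^ p - (h₁ - u) ^ p := by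
  have ha : 0 ≤ h₁ - min h₁ v := sub_nonneg.2 (min_le_left _ _)
  have hau : h₁ - min h₁ v < h₁ - u := by have := lt_min hu huv; linarith
  have hA : h₂ - min h₂ v ≤ h₁ - min h₁ v + (h₂ - h₁) := by
    have := min_le_min_right v h12.le; linarith
  calc (h₂ - min h₂ v) ^ p - (h₁ - min h₁ v) ^ p
      ≤ (h₁ - min h₁ v + (h₂ - h₁)) ^ p - (h₁ - min h₁ v) ^ p := by
        gcongr
        exact sub_nonneg.2 (min_le_left _ _)
    _ < (h₁ - u + (h₂ - h₁)) ^ p - (h₁ - u) ^ p :=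
        strictMonoOn_rpow_add_sub_rpow hp (sub_pos.2 h12) ha (ha.trans hau.le) hau
    _ = (h₂ - u) ^ p - (h₁ - u) ^ p := by ring_nf

lemma gFun_sub_gFun_lt {h₁ h₂ u v : ℝ} (hb : 0 < b) (h12 : h₁ < h₂) (hu : u < h₁) (huv : u < v) :
    gFun b m h₂ u - gFun b m h₁ u < gFun b m h₂ v - gFun b m h₁ v := by
  have hdiff (w : ℝ) : gFun b m h₂ w - gFun b m h₁ w = (h₂ ^ (2 * b + 1) - h₁ ^ (2 * b + 1)
      - ((h₂ - min h₂ w) ^ (2 * b + 1) - (h₁ - min h₁ w) ^ (2 * b + 1))) / (2 * b + 1) := by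
    unfold gFun
    ring
  rw [hdiff, hdiff, min_eq_right hu.le, min_eq_right (hu.trans h12).le]
  refine (div_lt_div_iff_of_pos_right (by linarith)).2 ?_
  linarith [rpow_sub_min_sub_rpow_sub_min_lt (p := 2 * b + 1) (by linarith) h12 hu huv]

end

theorem tau_strict_mono_general (b m h₁ h₂ t₁ T₁ τ₁ t₂ T₂ τ₂ : ℝ) (hb : 0 < b) (hm : 0 < m)
    (h12 : h₁ < h₂)
    (ht₁ : 0 < t₁) (ht₁' : t₁ < h₁/(b+1))
    (hT₁ : h₁/(b+1) < T₁)
    (ht₂ : 0 < t₂) (ht₂' : t₂ < h₂/(b+1)) (he₂ : t₂^2 * (h₂ - t₂) ^ (2*b) = m^2)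
    (hT₂ : h₂/(b+1) < T₂) (hT₂' : T₂ < h₂) (hE₂ : T₂^2 * (h₂ - T₂) ^ (2*b) = m^2)
    (hτ₁ : T₁ < τ₁)
    (hg₁ : m^2 / τ₁ + (h₁ ^ (2*b+1) - (h₁ - min h₁ τ₁) ^ (2*b+1)) / (2*b+1) =
           m^2 / t₁ + (h₁ ^ (2*b+1) - (h₁ - min h₁ t₁) ^ (2*b+1)) / (2*b+1))
    (hτ₂ : T₂ < τ₂)
    (hg₂ : m^2 / τ₂ + (h₂ ^ (2*b+1) - (h₂ - min h₂ τ₂) ^ (2*b+1)) / (2*b+1) =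
           m^2 / t₂ + (h₂ ^ (2*b+1) - (h₂ - min h₂ t₂) ^ (2*b+1)) / (2*b+1)) :
    τ₁ < τ₂ := by
  have hc : h₁ / (b + 1) < h₂ / (b + 1) := by gcongr
  have hh₁ : t₁ < h₁ := by
    have hpos : 0 < h₁ := (div_pos_iff_of_pos_right (by linarith)).1 (ht₁.trans ht₁')
    have : h₁ / (b + 1) < h₁ := div_lt_self hpos (by linarith)
    linarith
  have hmin : gFun b m h₂ t₂ ≤ gFun b m h₂ t₁ :=
    isMinOn_gFun hb ht₂ ht₂' hT₂ hT₂' he₂ hE₂ ⟨ht₁, by linarith⟩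
  have hgap : gFun b m h₂ t₁ - gFun b m h₁ t₁ < gFun b m h₂ τ₁ - gFun b m h₁ τ₁ :=
    gFun_sub_gFun_lt hb h12 hh₁ (by linarith)
  have hlt : gFun b m h₂ τ₂ < gFun b m h₂ τ₁ := by
    change gFun b m h₁ τ₁ = gFun b m h₁ t₁ at hg₁
    change gFun b m h₂ τ₂ = gFun b m h₂ t₂ at hg₂
    linarith
  by_contra! hle
  exact hlt.not_ge ((strictAntiOn_gFun_Ici hb hm hT₂ hT₂' hE₂).antitoneOn
    (mem_Ici.2 hτ₂.le) (mem_Ici.2 (hτ₂.le.trans hle)) hle)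

/-- The map h ↦ τ_h is strictly increasing on (h^#, h^*). -/
theorem tau_strict_mono (b m h₁ h₂ t₁ T₁ τ₁ t₂ T₂ τ₂ : ℝ) (hb : 0 < b) (hm : 0 < m)
    (hh₁ : (b+1) / b ^ (b/(b+1)) * m ^ (1/(b+1)) < h₁) (h12 : h₁ < h₂)
    (hh₂ : h₂ < (2*b+2) / (2*b+1) ^ (b/(b+1)) * m ^ (1/(b+1)))
    (ht₁ : 0 < t₁) (ht₁' : t₁ < h₁/(b+1)) (he₁ : t₁^2 * (h₁ - t₁) ^ (2*b) = m^2)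
    (hT₁ : h₁/(b+1) < T₁) (hT₁' : T₁ < h₁) (hE₁ : T₁^2 * (h₁ - T₁) ^ (2*b) = m^2)
    (ht₂ : 0 < t₂) (ht₂' : t₂ < h₂/(b+1)) (he₂ : t₂^2 * (h₂ - t₂) ^ (2*b) = m^2)
    (hT₂ : h₂/(b+1) < T₂) (hT₂' : T₂ < h₂) (hE₂ : T₂^2 * (h₂ - T₂) ^ (2*b) = m^2)
    (hτ₁ : T₁ < τ₁)
    (hg₁ : m^2 / τ₁ + (h₁ ^ (2*b+1) - (h₁ - min h₁ τ₁) ^ (2*b+1)) / (2*b+1) =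
           m^2 / t₁ + (h₁ ^ (2*b+1) - (h₁ - min h₁ t₁) ^ (2*b+1)) / (2*b+1))
    (hτ₂ : T₂ < τ₂)
    (hg₂ : m^2 / τ₂ + (h₂ ^ (2*b+1) - (h₂ - min h₂ τ₂) ^ (2*b+1)) / (2*b+1) =
           m^2 / t₂ + (h₂ ^ (2*b+1) - (h₂ - min h₂ t₂) ^ (2*b+1)) / (2*b+1)) :
    τ₁ < τ₂ :=
  tau_strict_mono_general b m h₁ h₂ t₁ T₁ τ₁ t₂ T₂ τ₂ hb hm h12 ht₁ ht₁' hT₁ ht₂ ht₂' he₂ hT₂ hT₂'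
    hE₂ hτ₁ hg₁ hτ₂ hg₂
end
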